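/- Let T be a finite tree with positive vertex weights and positive edge lengths, and for each edge e = (u,v) define g(e) = max{ r(T_u(v)), r(T_v(u)) }, where r(S) = min over points x of the subtree S of max_{v∈S} w(v)·d(x,v) is the weighted radius. If e* = (u*,v*) minimizes g over all edges, then the union of a weighted 1-center of T_{u*}(v*) and a weighted 1-center of T_{v*}(u*) is a weighted 2-center of T, i.e., a 2-point set X ⊆ T minimizing max_{v∈V} w(v)·d(X,v). -/

import Mathlib

/-- Length of a walk with respect to edge lengths `ℓ`. -/
def walkLength {V : Type*} {G : SimpleGraph V} (ℓ : V → V → ℝ) :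
    ∀ {u v : V}, G.Walk u v → ℝ :=
  fun p => (p.darts.map fun d => ℓ d.toProd.1 d.toProd.2).sum

/-- Shortest-path distance between vertices of `G` with edge lengths `ℓ`. -/
noncomputable def vdist {V : Type*} (G : SimpleGraph V) (ℓ : V → V → ℝ) (u v : V) : ℝ :=
  sInf {x | ∃ p : G.Walk u v, x = walkLength ℓ p}

/-- Distance from the point on edge `(u,v)` at parameter `s ∈ [0,1]` to vertex `z`. -/
noncomputable def pdist {V : Type*} (G : SimpleGraph V) (ℓ : V → V → ℝ)
    (u v : V) (s : ℝ) (z : V) : ℝ :=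
  min (s * ℓ u v + vdist G ℓ u z) ((1 - s) * ℓ u v + vdist G ℓ v z)

/-- The vertices of the connected component of `G - v` containing `t`. -/
def branch {V : Type*} (G : SimpleGraph V) (v t : V) : Set V :=
  {u | ∃ p : G.Walk t u, v ∉ p.support}

/-- `(a, b, s)` represents a point of the geometric realization of the subtree on the
vertex set `S`: either a point of an edge of `S` or a vertex of `S`. -/
def IsPointOn {V : Type*} (G : SimpleGraph V) (S : Set V) (a b : V) (s : ℝ) : Prop :=
  a ∈ S ∧ b ∈ S ∧ ((G.Adj a b ∧ s ∈ Set.Icc (0:ℝ) 1) ∨ (a = b ∧ s = 0))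

/-- `max_{z ∈ S} w(z)·d(x,z)` for the point `x = (a,b,s)`. -/
noncomputable def sideSup {V : Type*} (G : SimpleGraph V) (ℓ : V → V → ℝ) (w : V → ℝ)
    (S : Set V) (a b : V) (s : ℝ) : ℝ :=
  sSup ((fun z => w z * pdist G ℓ a b s z) '' S)

/-- The weighted radius of the subtree on vertex set `S`. -/
noncomputable def radius {V : Type*} (G : SimpleGraph V) (ℓ : V → V → ℝ) (w : V → ℝ)
    (S : Set V) : ℝ :=
  sInf {x | ∃ a b s, IsPointOn G S a b s ∧ x = sideSup G ℓ w S a b s}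

/-- `g(e)` for an edge `e = (u,v)`: the larger of the weighted radii of the two subtrees
obtained by deleting `e`. -/
noncomputable def gval {V : Type*} (G : SimpleGraph V) (ℓ : V → V → ℝ) (w : V → ℝ)
    (u v : V) : ℝ :=
  max (radius G ℓ w (branch G v u)) (radius G ℓ w (branch G u v))

/-! Let `x, x'` be any two points of `T`. Either one of them is at least as close as the
other to every vertex (then take any edge), or some edge `(u, v)` has `u` closer to `x` and `v`
strictly closer to `x'`; in the second case `x'` cannot lie inside `T_u(v)` and `x` cannot lie
inside `T_v(u)`. In both cases, on each side of the edge a single point serves all its vertices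
at least as well as `{x, x'}`, and projecting that point onto the side (through the endpoint of
the edge) does not increase any distance. Hence `g(u, v) ≤ S({x, x'}, T)`, while the two
1-centers of the sides of `e*` cost at most `g(e*) ≤ g(u, v)`. -/

open SimpleGraph

section vdist

variable {V : Type*} {G : SimpleGraph V} {ℓ : V → V → ℝ}

lemma walkLength_append {u v z : V} (p : G.Walk u v) (q : G.Walk v z) :
    walkLength ℓ (p.append q) = walkLength ℓ p + walkLength ℓ q := by
  simp [walkLength, Walk.darts_append]

lemma walkLength_nonneg (hℓ : ∀ u v, 0 ≤ ℓ u v) {u v : V} (p : G.Walk u v) :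
    0 ≤ walkLength ℓ p :=
  List.sum_nonneg (by simp only [List.mem_map]; rintro _ ⟨d, -, rfl⟩; exact hℓ _ _)

lemma vdist_le_walkLength (hℓ : ∀ u v, 0 ≤ ℓ u v) {u v : V} (p : G.Walk u v) :
    vdist G ℓ u v ≤ walkLength ℓ p :=
  csInf_le ⟨0, by rintro _ ⟨q, rfl⟩; exact walkLength_nonneg hℓ q⟩ ⟨p, rfl⟩

lemma le_vdist (hconn : G.Connected) {u v : V} {c : ℝ}
    (h : ∀ p : G.Walk u v, c ≤ walkLength ℓ p) : c ≤ vdist G ℓ u v :=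
  le_csInf (let ⟨p⟩ := hconn.preconnected u v; ⟨_, p, rfl⟩)
    (by rintro _ ⟨p, rfl⟩; exact h p)

variable (hconn : G.Connected) (hℓ : ∀ u v, 0 ≤ ℓ u v)
include hconn hℓ

lemma vdist_nonneg (u v : V) : 0 ≤ vdist G ℓ u v :=
  le_vdist hconn (walkLength_nonneg hℓ)

lemma vdist_self (u : V) : vdist G ℓ u u = 0 :=
  le_antisymm (by simpa [walkLength] using vdist_le_walkLength hℓ (Walk.nil : G.Walk u u))
    (vdist_nonneg hconn hℓ u u)

lemma vdist_triangle (u v z : V) : vdist G ℓ u z ≤ vdist G ℓ u v + vdist G ℓ v z := by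
  suffices ∀ p : G.Walk u v, vdist G ℓ u z - vdist G ℓ v z ≤ walkLength ℓ p by
    linarith [le_vdist hconn this]
  intro p
  suffices ∀ q : G.Walk v z, vdist G ℓ u z - walkLength ℓ p ≤ walkLength ℓ q by
    linarith [le_vdist hconn this]
  intro q
  linarith [vdist_le_walkLength hℓ (p.append q), walkLength_append (ℓ := ℓ) p q]

lemma vdist_eq_add_of_forall_mem_support {y z : V} (u : V)
    (h : ∀ p : G.Walk y z, u ∈ p.support) :
    vdist G ℓ y z = vdist G ℓ y u + vdist G ℓ u z := by
  classical
  refine le_antisymm (vdist_triangle hconn hℓ y u z) (le_vdist hconn fun p => ?_)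
  conv_rhs => rw [← p.take_spec (h p), walkLength_append]
  exact add_le_add (vdist_le_walkLength hℓ _) (vdist_le_walkLength hℓ _)

end vdist

section branch

variable {V : Type*} {G : SimpleGraph V} {u v : V}

lemma mem_branch_self (h : u ≠ v) : u ∈ branch G v u :=
  ⟨Walk.nil, by simpa using h.symm⟩

lemma notMem_branch (t : V) : v ∉ branch G v t :=
  fun ⟨p, hp⟩ => hp p.end_mem_support

lemma mem_branch_of_adj {t y z : V} (hz : z ∈ branch G v t) (h : G.Adj z y) (hy : y ≠ v) :
    y ∈ branch G v t := by
  obtain ⟨p, hp⟩ := hz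
  exact ⟨p.concat h, by simp [Walk.support_concat, hp, hy.symm]⟩

lemma mem_branch_or_mem_branch (hconn : G.Connected) (hadj : G.Adj u v) (z : V) :
    z ∈ branch G v u ∨ z ∈ branch G u v := by
  by_contra hz
  obtain ⟨p⟩ := hconn.preconnected u z
  obtain ⟨d, -, hy, hy'⟩ := p.exists_boundary_dart
    {y | y ∈ branch G v u ∨ y ∈ branch G u v} (.inl (mem_branch_self hadj.ne)) hz
  refine hy' ?_
  rcases hy with hy | hy
  · by_cases h : d.snd = v
    · exact .inr (by rw [h]; exact mem_branch_self hadj.ne.symm)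
    · exact .inl (mem_branch_of_adj hy d.adj h)
  · by_cases h : d.snd = u
    · exact .inl (by rw [h]; exact mem_branch_self hadj.ne)
    · exact .inr (mem_branch_of_adj hy d.adj h)

lemma eq_of_mem_branch_of_notMem_branch (hG : G.IsAcyclic) (hadj : G.Adj u v)
    {a b : V} (ha : a ∈ branch G v u) (hb : b ∉ branch G v u) (hab : G.Adj a b) :
    a = u ∧ b = v := by
  obtain rfl : b = v := by_contra fun h => hb (mem_branch_of_adj ha hab h)
  obtain ⟨p, hp⟩ := ha
  have hbridge := isBridge_iff_forall_walk_mem_edges.mp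
    (isAcyclic_iff_forall_adj_isBridge.mp hG hadj) (p.concat hab)
  rw [Walk.edges_concat, List.concat_eq_append, List.mem_append, List.mem_singleton] at hbridge
  rcases hbridge with h | h
  · exact absurd (p.snd_mem_support_of_mem_edges h) hp
  · simp only [Sym2.eq, Sym2.rel_iff', Prod.mk.injEq, Prod.swap_prod_mk] at h
    rcases h with ⟨rfl, -⟩ | ⟨rfl, -⟩
    · exact ⟨rfl, rfl⟩
    · exact absurd rfl hadj.ne

lemma mem_support_of_mem_branch (hG : G.IsAcyclic) (hadj : G.Adj u v) {y z : V}
    (p : G.Walk y z) (hy : y ∈ branch G v u) (hz : z ∉ branch G v u) : u ∈ p.support := by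
  obtain ⟨d, hd, hfst, hsnd⟩ := p.exists_boundary_dart _ hy hz
  rw [← (eq_of_mem_branch_of_notMem_branch hG hadj hfst hsnd d.adj).1]
  exact p.dart_fst_mem_support_of_mem_darts hd

lemma eq_of_adj_or_eq_of_mem_branch (hG : G.IsAcyclic) (hadj : G.Adj u v)
    {a b : V} (hab : G.Adj a b ∨ a = b) (ha : a ∈ branch G v u) (hb : b ∉ branch G v u) :
    a = u := by
  rcases hab with hab | rfl
  · exact (eq_of_mem_branch_of_notMem_branch hG hadj ha hb hab).1
  · exact absurd ha hb

end branch

section pdist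

variable {V : Type*} {G : SimpleGraph V} {ℓ : V → V → ℝ} {a b u : V} {s : ℝ}

lemma pdist_eq_pdist_add_of_vdist_eq {y : V} {c : ℝ}
    (ha : vdist G ℓ a y = vdist G ℓ a u + c) (hb : vdist G ℓ b y = vdist G ℓ b u + c) :
    pdist G ℓ a b s y = pdist G ℓ a b s u + c := by
  rw [pdist, pdist, ha, hb, ← add_assoc, ← add_assoc, min_add_add_right]

lemma IsPointOn.mem_Icc {S : Set V} (hx : IsPointOn G S a b s) : s ∈ Set.Icc (0 : ℝ) 1 := by
  rcases hx.2.2 with ⟨-, hs⟩ | ⟨-, rfl⟩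
  · exact hs
  · simp

lemma IsPointOn.adj_or_eq {S : Set V} (hx : IsPointOn G S a b s) : G.Adj a b ∨ a = b :=
  hx.2.2.imp And.left And.left

variable (hconn : G.Connected) (hℓ : ∀ u v, 0 ≤ ℓ u v)
include hℓ

lemma pdist_self_zero (u z : V) : pdist G ℓ u u 0 z = vdist G ℓ u z := by
  simp [pdist, hℓ u u]

include hconn

lemma pdist_nonneg (hs : s ∈ Set.Icc (0 : ℝ) 1) (z : V) : 0 ≤ pdist G ℓ a b s z :=
  le_min (add_nonneg (mul_nonneg hs.1 (hℓ _ _)) (vdist_nonneg hconn hℓ _ _))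
    (add_nonneg (mul_nonneg (by linarith [hs.2]) (hℓ _ _)) (vdist_nonneg hconn hℓ _ _))

lemma pdist_le_pdist_add_vdist (a b : V) (s : ℝ) (y z : V) :
    pdist G ℓ a b s z ≤ pdist G ℓ a b s y + vdist G ℓ y z := by
  rw [pdist, pdist, ← min_add_add_right]
  apply min_le_min <;> linarith [vdist_triangle hconn hℓ a y z, vdist_triangle hconn hℓ b y z]

end pdist

section tree

variable {V : Type*} {G : SimpleGraph V} {ℓ : V → V → ℝ} {u v a b a' b' : V} {s s' : ℝ}
  (hG : G.IsTree) (hℓ : ∀ u v, 0 ≤ ℓ u v)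
include hG hℓ

lemma vdist_eq_add_of_mem_branch (hadj : G.Adj u v) {y z : V} (hy : y ∈ branch G v u)
    (hz : z ∉ branch G v u) : vdist G ℓ y z = vdist G ℓ y u + vdist G ℓ u z :=
  vdist_eq_add_of_forall_mem_support hG.connected hℓ u
    fun p => mem_support_of_mem_branch hG.isAcyclic hadj p hy hz

lemma vdist_eq_add_of_notMem_branch (hadj : G.Adj u v) {y z : V} (hy : y ∉ branch G v u)
    (hz : z ∈ branch G v u) : vdist G ℓ y z = vdist G ℓ y u + vdist G ℓ u z :=
  vdist_eq_add_of_forall_mem_support hG.connected hℓ u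
    fun p => by simpa using mem_support_of_mem_branch hG.isAcyclic hadj p.reverse hz hy

lemma pdist_eq_pdist_add_vdist_of_notMem_branch (hadj : G.Adj u v)
    (hin : a ∈ branch G v u ∧ b ∈ branch G v u) {y : V} (hy : y ∉ branch G v u) :
    pdist G ℓ a b s y = pdist G ℓ a b s u + vdist G ℓ u y :=
  pdist_eq_pdist_add_of_vdist_eq (vdist_eq_add_of_mem_branch hG hℓ hadj hin.1 hy)
    (vdist_eq_add_of_mem_branch hG hℓ hadj hin.2 hy)

lemma pdist_eq_pdist_add_vdist_of_mem_branch (hadj : G.Adj u v)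
    (hx : IsPointOn G Set.univ a b s) (hout : ¬(a ∈ branch G v u ∧ b ∈ branch G v u))
    {z : V} (hz : z ∈ branch G v u) :
    pdist G ℓ a b s z = pdist G ℓ a b s u + vdist G ℓ u z := by
  have hsplit : ∀ c, (c = u ∨ c ∉ branch G v u) →
      vdist G ℓ c z = vdist G ℓ c u + vdist G ℓ u z := by
    rintro c (rfl | hc)
    · rw [vdist_self hG.connected hℓ, zero_add]
    · exact vdist_eq_add_of_notMem_branch hG hℓ hadj hc hz
  refine pdist_eq_pdist_add_of_vdist_eq (hsplit a ?_) (hsplit b ?_)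
  · by_cases ha : a ∈ branch G v u
    · exact .inl (eq_of_adj_or_eq_of_mem_branch hG.isAcyclic hadj hx.adj_or_eq ha
        fun hb => hout ⟨ha, hb⟩)
    · exact .inr ha
  · by_cases hb : b ∈ branch G v u
    · exact .inl (eq_of_adj_or_eq_of_mem_branch hG.isAcyclic hadj
        (hx.adj_or_eq.imp Adj.symm Eq.symm) hb fun ha => hout ⟨ha, hb⟩)
    · exact .inr hb

lemma pdist_le_pdist_of_mem_branch (hadj : G.Adj u v) (hx' : IsPointOn G Set.univ a' b' s')
    (hout : ¬(a' ∈ branch G v u ∧ b' ∈ branch G v u))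
    (hu : pdist G ℓ a b s u ≤ pdist G ℓ a' b' s' u) {z : V} (hz : z ∈ branch G v u) :
    pdist G ℓ a b s z ≤ pdist G ℓ a' b' s' z := by
  rw [pdist_eq_pdist_add_vdist_of_mem_branch hG hℓ hadj hx' hout hz]
  linarith [pdist_le_pdist_add_vdist hG.connected hℓ a b s u z]

end tree

section radius

variable {V : Type*} {G : SimpleGraph V} {ℓ : V → V → ℝ} {w : V → ℝ} {S : Set V}
  {a b : V} {s : ℝ}

lemma sideSup_le {M : ℝ} (hS : S.Nonempty) (h : ∀ z ∈ S, w z * pdist G ℓ a b s z ≤ M) :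
    sideSup G ℓ w S a b s ≤ M :=
  csSup_le (hS.image _) (by rintro _ ⟨z, hz, rfl⟩; exact h z hz)

variable [Finite V]

lemma le_sideSup {z : V} (hz : z ∈ S) : w z * pdist G ℓ a b s z ≤ sideSup G ℓ w S a b s :=
  le_csSup (S.toFinite.image _).bddAbove ⟨z, hz, rfl⟩

variable (hconn : G.Connected) (hℓ : ∀ u v, 0 ≤ ℓ u v) (hw : ∀ v, 0 ≤ w v)
include hconn hℓ hw

lemma sideSup_nonneg (hx : IsPointOn G S a b s) : 0 ≤ sideSup G ℓ w S a b s :=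
  (mul_nonneg (hw a) (pdist_nonneg hconn hℓ hx.mem_Icc a)).trans (le_sideSup hx.1)

lemma radius_le_sideSup (hx : IsPointOn G S a b s) :
    radius G ℓ w S ≤ sideSup G ℓ w S a b s :=
  csInf_le ⟨0, by rintro _ ⟨a', b', s', hx', rfl⟩; exact sideSup_nonneg hconn hℓ hw hx'⟩
    ⟨a, b, s, hx, rfl⟩

lemma radius_eq_sideSup (hx : IsPointOn G S a b s)
    (hmin : ∀ a' b' s', IsPointOn G S a' b' s' →
      sideSup G ℓ w S a b s ≤ sideSup G ℓ w S a' b' s') :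
    radius G ℓ w S = sideSup G ℓ w S a b s :=
  le_antisymm (radius_le_sideSup hconn hℓ hw hx)
    (le_csInf ⟨_, a, b, s, hx, rfl⟩
      (by rintro _ ⟨a', b', s', hx', rfl⟩; exact hmin a' b' s' hx'))

end radius

/-- A point of `T` outside `T_u(v)` is no better for `T_u(v)` than its projection `u`. -/
lemma radius_branch_le_sideSup {V : Type*} [Finite V] {G : SimpleGraph V} {ℓ : V → V → ℝ}
    {w : V → ℝ} {u v a b : V} {s : ℝ} (hG : G.IsTree) (hℓ : ∀ u v, 0 ≤ ℓ u v)
    (hw : ∀ v, 0 ≤ w v) (hadj : G.Adj u v) (hx : IsPointOn G Set.univ a b s) :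
    radius G ℓ w (branch G v u) ≤ sideSup G ℓ w (branch G v u) a b s := by
  by_cases hin : a ∈ branch G v u ∧ b ∈ branch G v u
  · exact radius_le_sideSup hG.connected hℓ hw ⟨hin.1, hin.2, hx.2.2⟩
  have hu : IsPointOn G (branch G v u) u u 0 :=
    ⟨mem_branch_self hadj.ne, mem_branch_self hadj.ne, .inr ⟨rfl, rfl⟩⟩
  refine (radius_le_sideSup hG.connected hℓ hw hu).trans
    (sideSup_le ⟨u, hu.1⟩ fun z hz => le_trans ?_ (le_sideSup hz))
  rw [pdist_self_zero hℓ, pdist_eq_pdist_add_vdist_of_mem_branch hG hℓ hadj hx hin hz]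
  exact mul_le_mul_of_nonneg_left
    (le_add_of_nonneg_left (pdist_nonneg hG.connected hℓ hx.mem_Icc u)) (hw z)

section pairCost

variable {V : Type*} [Fintype V] [Nonempty V] {G : SimpleGraph V} {ℓ : V → V → ℝ}
  {w : V → ℝ} {a b a' b' : V} {s s' : ℝ}

/-- `S({x, x'}, T)` for the points `x = (a, b, s)` and `x' = (a', b', s')`. -/
noncomputable def pairCost (G : SimpleGraph V) (ℓ : V → V → ℝ) (w : V → ℝ)
    (a b : V) (s : ℝ) (a' b' : V) (s' : ℝ) : ℝ :=
  Finset.univ.sup' Finset.univ_nonempty fun z =>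
    w z * min (pdist G ℓ a b s z) (pdist G ℓ a' b' s' z)

lemma pairCost_comm : pairCost G ℓ w a b s a' b' s' = pairCost G ℓ w a' b' s' a b s := by
  simp only [pairCost, min_comm]

lemma sideSup_le_pairCost {S : Set V} (hS : S.Nonempty)
    (hdom : ∀ z ∈ S, pdist G ℓ a b s z ≤ pdist G ℓ a' b' s' z) :
    sideSup G ℓ w S a b s ≤ pairCost G ℓ w a b s a' b' s' :=
  sideSup_le hS fun z hz =>
    calc w z * pdist G ℓ a b s z
        = w z * min (pdist G ℓ a b s z) (pdist G ℓ a' b' s' z) := by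
          rw [min_eq_left (hdom z hz)]
      _ ≤ pairCost G ℓ w a b s a' b' s' :=
          Finset.le_sup' (fun z => w z * min (pdist G ℓ a b s z) (pdist G ℓ a' b' s' z))
            (Finset.mem_univ z)

variable {u v : V} (hG : G.IsTree) (hℓ : ∀ u v, 0 ≤ ℓ u v) (hw : ∀ v, 0 ≤ w v)
include hG hℓ hw

lemma radius_branch_le_pairCost (hadj : G.Adj u v) (hx : IsPointOn G Set.univ a b s)
    (hdom : ∀ z ∈ branch G v u, pdist G ℓ a b s z ≤ pdist G ℓ a' b' s' z) :
    radius G ℓ w (branch G v u) ≤ pairCost G ℓ w a b s a' b' s' :=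
  (radius_branch_le_sideSup hG hℓ hw hadj hx).trans
    (sideSup_le_pairCost ⟨u, mem_branch_self hadj.ne⟩ hdom)

lemma pairCost_le_gval (hadj : G.Adj u v) (hc : IsPointOn G (branch G v u) a b s)
    (hcmin : ∀ a₀ b₀ s₀, IsPointOn G (branch G v u) a₀ b₀ s₀ →
      sideSup G ℓ w (branch G v u) a b s ≤ sideSup G ℓ w (branch G v u) a₀ b₀ s₀)
    (hc' : IsPointOn G (branch G u v) a' b' s')
    (hcmin' : ∀ a₀ b₀ s₀, IsPointOn G (branch G u v) a₀ b₀ s₀ →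
      sideSup G ℓ w (branch G u v) a' b' s' ≤ sideSup G ℓ w (branch G u v) a₀ b₀ s₀) :
    pairCost G ℓ w a b s a' b' s' ≤ gval G ℓ w u v := by
  rw [gval, radius_eq_sideSup hG.connected hℓ hw hc hcmin,
    radius_eq_sideSup hG.connected hℓ hw hc' hcmin']
  refine Finset.sup'_le _ _ fun z _ => ?_
  rcases mem_branch_or_mem_branch hG.connected hadj z with hz | hz
  · exact le_max_of_le_left
      ((mul_le_mul_of_nonneg_left (min_le_left _ _) (hw z)).trans (le_sideSup hz))
  · exact le_max_of_le_right
      ((mul_le_mul_of_nonneg_left (min_le_right _ _) (hw z)).trans (le_sideSup hz))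

lemma gval_le_pairCost_of_forall_le (hadj : G.Adj u v) (hx : IsPointOn G Set.univ a b s)
    (hle : ∀ z, pdist G ℓ a b s z ≤ pdist G ℓ a' b' s' z) :
    gval G ℓ w u v ≤ pairCost G ℓ w a b s a' b' s' :=
  max_le (radius_branch_le_pairCost hG hℓ hw hadj hx fun z _ => hle z)
    (radius_branch_le_pairCost hG hℓ hw hadj.symm hx fun z _ => hle z)

lemma exists_adj_gval_le_pairCost {u₀ v₀ : V} (hadj₀ : G.Adj u₀ v₀)
    (hx : IsPointOn G Set.univ a b s) (hx' : IsPointOn G Set.univ a' b' s') :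
    ∃ u v, G.Adj u v ∧ gval G ℓ w u v ≤ pairCost G ℓ w a b s a' b' s' := by
  by_cases hall : ∀ z, pdist G ℓ a b s z ≤ pdist G ℓ a' b' s' z
  · exact ⟨u₀, v₀, hadj₀, gval_le_pairCost_of_forall_le hG hℓ hw hadj₀ hx hall⟩
  by_cases hall' : ∀ z, pdist G ℓ a' b' s' z ≤ pdist G ℓ a b s z
  · rw [pairCost_comm]
    exact ⟨u₀, v₀, hadj₀, gval_le_pairCost_of_forall_le hG hℓ hw hadj₀ hx' hall'⟩
  push Not at hall hall'
  obtain ⟨α, hα⟩ := hall'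
  obtain ⟨β, hβ⟩ := hall
  obtain ⟨p⟩ := hG.connected.preconnected α β
  obtain ⟨⟨⟨u, v⟩, huv⟩, -, hu, hv⟩ := p.exists_boundary_dart
    {z | pdist G ℓ a b s z ≤ pdist G ℓ a' b' s' z} hα.le (not_le.mpr hβ)
  simp only [Set.mem_ofPred_eq, not_le] at hu hv
  -- a point inside one side reaches the other side through the edge, where it already loses
  have hout' : ¬(a' ∈ branch G v u ∧ b' ∈ branch G v u) := fun hin => by
    linarith [pdist_eq_pdist_add_vdist_of_notMem_branch hG hℓ huv (s := s') hin
        (notMem_branch u),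
      pdist_le_pdist_add_vdist hG.connected hℓ a b s u v]
  have hout : ¬(a ∈ branch G u v ∧ b ∈ branch G u v) := fun hin => by
    linarith [pdist_eq_pdist_add_vdist_of_notMem_branch hG hℓ huv.symm (s := s) hin
        (notMem_branch v),
      pdist_le_pdist_add_vdist hG.connected hℓ a' b' s' v u]
  refine ⟨u, v, huv, max_le ?_ ?_⟩
  · exact radius_branch_le_pairCost hG hℓ hw huv hx
      fun z hz => pdist_le_pdist_of_mem_branch hG hℓ huv hx' hout' hu hz
  · rw [pairCost_comm]
    exact radius_branch_le_pairCost hG hℓ hw huv.symm hx'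
      fun z hz => pdist_le_pdist_of_mem_branch hG hℓ huv.symm hx hout hv.le hz

end pairCost

theorem stmt15_general {V : Type*} [Fintype V] [Nonempty V]
    (G : SimpleGraph V) (hG : G.IsTree)
    (w : V → ℝ) (hw : ∀ v, 0 < w v)
    (ℓ : V → V → ℝ) (hℓnn : ∀ u v, 0 ≤ ℓ u v)
    (ustar vstar : V) (hsplit : G.Adj ustar vstar)
    (hopt : ∀ u v, G.Adj u v → gval G ℓ w ustar vstar ≤ gval G ℓ w u v)
    -- `(a₁, b₁, s₁)` is a weighted 1-center of the side of `u*`: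
    (a₁ b₁ : V) (s₁ : ℝ) (hc₁ : IsPointOn G (branch G vstar ustar) a₁ b₁ s₁)
    (hc₁min : ∀ a b s, IsPointOn G (branch G vstar ustar) a b s →
      sideSup G ℓ w (branch G vstar ustar) a₁ b₁ s₁ ≤
        sideSup G ℓ w (branch G vstar ustar) a b s)
    -- `(a₂, b₂, s₂)` is a weighted 1-center of the side of `v*`:
    (a₂ b₂ : V) (s₂ : ℝ) (hc₂ : IsPointOn G (branch G ustar vstar) a₂ b₂ s₂)
    (hc₂min : ∀ a b s, IsPointOn G (branch G ustar vstar) a b s →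
      sideSup G ℓ w (branch G ustar vstar) a₂ b₂ s₂ ≤
        sideSup G ℓ w (branch G ustar vstar) a b s) :
    -- then `{c₁, c₂}` minimizes `S(X,T)` over all 2-point sets `X` of points of `T`:
    ∀ a b s a' b' s', IsPointOn G Set.univ a b s → IsPointOn G Set.univ a' b' s' →
      (Finset.univ.sup' Finset.univ_nonempty fun z =>
          w z * min (pdist G ℓ a₁ b₁ s₁ z) (pdist G ℓ a₂ b₂ s₂ z)) ≤
        Finset.univ.sup' Finset.univ_nonempty fun z =>
          w z * min (pdist G ℓ a b s z) (pdist G ℓ a' b' s' z) := by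
  intro a b s a' b' s' hx hx'
  have hw' : ∀ v, 0 ≤ w v := fun v => (hw v).le
  obtain ⟨u, v, huv, hle⟩ := exists_adj_gval_le_pairCost hG hℓnn hw' hsplit hx hx'
  calc pairCost G ℓ w a₁ b₁ s₁ a₂ b₂ s₂
      ≤ gval G ℓ w ustar vstar :=
        pairCost_le_gval hG hℓnn hw' hsplit hc₁ hc₁min hc₂ hc₂min
    _ ≤ gval G ℓ w u v := hopt u v huv
    _ ≤ pairCost G ℓ w a b s a' b' s' := hle

/-- If the split edge `(u*,v*)` minimizes `g` over all edges, then the pair consisting of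
a weighted 1-center of each side is a weighted 2-center of the tree. -/
theorem stmt15 {V : Type*} [Fintype V] [DecidableEq V] [Nonempty V]
    (G : SimpleGraph V) (hG : G.IsTree)
    (w : V → ℝ) (hw : ∀ v, 0 < w v)
    (ℓ : V → V → ℝ) (hℓsym : ∀ u v, ℓ u v = ℓ v u)
    (hℓpos : ∀ u v, G.Adj u v → 0 < ℓ u v) (hℓnn : ∀ u v, 0 ≤ ℓ u v)
    (ustar vstar : V) (hsplit : G.Adj ustar vstar)
    (hopt : ∀ u v, G.Adj u v → gval G ℓ w ustar vstar ≤ gval G ℓ w u v)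
    -- `(a₁, b₁, s₁)` is a weighted 1-center of the side of `u*`:
    (a₁ b₁ : V) (s₁ : ℝ) (hc₁ : IsPointOn G (branch G vstar ustar) a₁ b₁ s₁)
    (hc₁min : ∀ a b s, IsPointOn G (branch G vstar ustar) a b s →
      sideSup G ℓ w (branch G vstar ustar) a₁ b₁ s₁ ≤
        sideSup G ℓ w (branch G vstar ustar) a b s)
    -- `(a₂, b₂, s₂)` is a weighted 1-center of the side of `v*`:
    (a₂ b₂ : V) (s₂ : ℝ) (hc₂ : IsPointOn G (branch G ustar vstar) a₂ b₂ s₂)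
    (hc₂min : ∀ a b s, IsPointOn G (branch G ustar vstar) a b s →
      sideSup G ℓ w (branch G ustar vstar) a₂ b₂ s₂ ≤
        sideSup G ℓ w (branch G ustar vstar) a b s) :
    -- then `{c₁, c₂}` minimizes `S(X,T)` over all 2-point sets `X` of points of `T`:
    ∀ a b s a' b' s', IsPointOn G Set.univ a b s → IsPointOn G Set.univ a' b' s' →
      (Finset.univ.sup' Finset.univ_nonempty fun z =>
          w z * min (pdist G ℓ a₁ b₁ s₁ z) (pdist G ℓ a₂ b₂ s₂ z)) ≤
        Finset.univ.sup' Finset.univ_nonempty fun z =>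
          w z * min (pdist G ℓ a b s z) (pdist G ℓ a' b' s' z) :=
  stmt15_general G hG w hw ℓ hℓnn ustar vstar hsplit hopt a₁ b₁ s₁ hc₁ hc₁min a₂ b₂ s₂ hc₂ hc₂min
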